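/- arXiv:1001.1083 — 2 statements merged into one kernel-verified Lean document; each statement's English description precedes it below -/
import Mathlib

section
/- Let ℓ > 2 and consider the root system of type A_ℓ: Σ = {e_i − e_j : 1 ≤ i, j ≤ ℓ+1, i ≠ j} in ℝ^{ℓ+1}, with positive roots Σ₊ = {e_i − e_j : i < j} and simple roots Δ = {e_i − e_{i+1} : 1 ≤ i ≤ ℓ}. Let R ⊆ Σ₊ be a set of Hessenberg type and μ ∈ R a maximal root with shadow S_μ = {α ∈ R : μ − α is a nonnegative integer combination of Δ}. Then S_μ is closed under root addition: if α, β ∈ S_μ and α + β ∈ Σ, then α + β ∈ S_μ. (Hence each shadow spans a nilpotent Iwasawa subalgebra of the nilpotent Iwasawa algebra of a simple Lie algebra with restricted root system A_ℓ.) -/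
/-!
Write `μ = e_a - e_b`. The coefficient of `δ_t` in a vector `v` is the partial sum
`v 0 + ⋯ + v t`, so `μ - (e_i - e_j)` is a nonnegative combination of simple roots exactly when
`a ≤ i < j ≤ b`; conversely, peeling roots off `μ` from both ends, the Hessenberg property puts
every such `e_i - e_j` into `R`. Finally, if `e_i - e_j` and `e_p - e_q` add up to a root, then
`j = p` or `q = i`, so the sum is `e_i - e_q` or `e_p - e_j`, whose endpoints again lie in `[a, b]`.
-/

open Finset

namespace TypeA

variable {n : ℕ}

def root (i j : Fin (n + 1)) : Fin (n + 1) → ℝ := Pi.single i 1 - Pi.single j 1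

def simpleRoot (k : Fin n) : Fin (n + 1) → ℝ := root k.castSucc k.succ

variable (n) in
def roots : Set (Fin (n + 1) → ℝ) := {v | ∃ i j, i ≠ j ∧ v = root i j}

variable (n) in
def posRoots : Set (Fin (n + 1) → ℝ) := {v | ∃ i j, i < j ∧ v = root i j}

variable (n) in
def simpleRootCone : AddSubmonoid (Fin (n + 1) → ℝ) := AddSubmonoid.closure (Set.range simpleRoot)

def IsHessenberg (R : Set (Fin (n + 1) → ℝ)) : Prop :=
  ∀ α ∈ R, ∀ β ∈ posRoots n, α - β ∈ posRoots n → α - β ∈ R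

def shadow (R : Set (Fin (n + 1) → ℝ)) (μ : Fin (n + 1) → ℝ) : Set (Fin (n + 1) → ℝ) :=
  {α | α ∈ R ∧ μ - α ∈ simpleRootCone n}

lemma mem_simpleRootCone_iff {v : Fin (n + 1) → ℝ} :
    v ∈ simpleRootCone n ↔ ∃ c : Fin n → ℕ, v = ∑ k, (c k : ℝ) • simpleRoot k := by
  simp only [simpleRootCone, AddSubmonoid.mem_closure_range_iff_of_fintype, Nat.cast_smul_eq_nsmul]

@[simp]
lemma root_self (i : Fin (n + 1)) : root i i = 0 := sub_self _

lemma root_add_root (i j k : Fin (n + 1)) : root i j + root j k = root i k := by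
  simp only [root]; abel

lemma root_mem_simpleRootCone {u w : Fin (n + 1)} (huw : u ≤ w) : root u w ∈ simpleRootCone n := by
  induction w using Fin.induction with
  | zero => simp [Fin.le_zero_iff.1 huw, zero_mem]
  | succ k ih =>
    rcases huw.eq_or_lt with rfl | hlt
    · simp [zero_mem]
    · rw [← root_add_root u k.castSucc k.succ]
      exact add_mem (ih (Fin.le_castSucc_iff.2 hlt)) (AddSubmonoid.subset_closure ⟨k, rfl⟩)

lemma root_sub_root_mem_simpleRootCone {a b u w : Fin (n + 1)} (hau : a ≤ u) (hwb : w ≤ b) :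
    root a b - root u w ∈ simpleRootCone n := by
  have : root a b - root u w = root a u + root w b := by
    rw [← root_add_root a u b, ← root_add_root u w b]; abel
  rw [this]
  exact add_mem (root_mem_simpleRootCone hau) (root_mem_simpleRootCone hwb)

lemma sum_Iic_root (t u w : Fin (n + 1)) :
    ∑ m ∈ Iic t, root u w m = (if u ≤ t then 1 else 0) - (if w ≤ t then 1 else 0) := by
  simp [root, sum_sub_distrib, sum_pi_single']

lemma sum_Iic_nonneg_of_mem_simpleRootCone {v : Fin (n + 1) → ℝ} (hv : v ∈ simpleRootCone n)
    (t : Fin (n + 1)) : 0 ≤ ∑ m ∈ Iic t, v m := by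
  induction hv using AddSubmonoid.closure_induction with
  | mem _ h =>
    obtain ⟨k, rfl⟩ := h
    rw [simpleRoot, sum_Iic_root]
    have : k.succ ≤ t → k.castSucc ≤ t := Fin.castSucc_lt_succ.le.trans
    split_ifs <;> simp_all
  | zero => simp
  | add _ _ _ _ h₁ h₂ => simpa [sum_add_distrib] using add_nonneg h₁ h₂

lemma le_and_le_of_root_sub_root_mem_simpleRootCone {a b i j : Fin (n + 1)} (hab : a < b)
    (hij : i < j) (h : root a b - root i j ∈ simpleRootCone n) : a ≤ i ∧ j ≤ b := by
  have hsum (t : Fin (n + 1)) := sum_Iic_nonneg_of_mem_simpleRootCone h t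
  simp only [Pi.sub_apply, sum_sub_distrib, sum_Iic_root] at hsum
  constructor
  · by_contra! hia
    have := hsum i
    simp [not_le_of_gt, hia, hia.trans hab, hij] at this
  · by_contra! hbj
    have := hsum (max b i)
    simp [hab.le, hbj, hij, not_le_of_gt] at this

lemma eq_or_eq_of_root_add_root_eq_root {i j p q x y : Fin (n + 1)} (hij : i ≠ j) (hpq : p ≠ q)
    (h : root i j + root p q = root x y) : j = p ∨ q = i := by
  by_contra! ⟨hjp, hqi⟩
  have hi := congrFun h i
  have hp := congrFun h p
  simp only [root, Pi.add_apply, Pi.sub_apply, Pi.single_apply] at hi hp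
  -- the left side is `1` at both `i` and `p` (or `2` if `i = p`), but `root x y` takes the
  -- value `1` only at `x`
  grind

namespace IsHessenberg

variable {R : Set (Fin (n + 1) → ℝ)}

lemma root_mem_of_lt {i j k : Fin (n + 1)} (hR : IsHessenberg R) (h : root i k ∈ R) (hij : i < j)
    (hjk : j < k) : root i j ∈ R ∧ root j k ∈ R := by
  have hleft : root i k - root j k = root i j := by rw [← root_add_root i j k, add_sub_cancel_right]
  have hright : root i k - root i j = root j k := by rw [← root_add_root i j k, add_sub_cancel_left]
  constructor
  · rw [← hleft]
    exact hR _ h _ ⟨j, k, hjk, rfl⟩ (hleft ▸ ⟨i, j, hij, rfl⟩)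
  · rw [← hright]
    exact hR _ h _ ⟨i, j, hij, rfl⟩ (hright ▸ ⟨j, k, hjk, rfl⟩)

lemma root_mem_of_le {a b u w : Fin (n + 1)} (hR : IsHessenberg R) (h : root a b ∈ R)
    (hau : a ≤ u) (huw : u < w) (hwb : w ≤ b) : root u w ∈ R := by
  have hub : root u b ∈ R := by
    rcases hau.eq_or_lt with rfl | hau
    · exact h
    · exact (hR.root_mem_of_lt h hau (huw.trans_le hwb)).2
  rcases hwb.eq_or_lt with rfl | hwb
  · exact hub
  · exact (hR.root_mem_of_lt hub huw hwb).1

theorem add_mem_shadow (hR : IsHessenberg R) (hRpos : R ⊆ posRoots n) {μ α β : Fin (n + 1) → ℝ}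
    (hμ : μ ∈ R) (hα : α ∈ shadow R μ) (hβ : β ∈ shadow R μ) (hαβ : α + β ∈ roots n) :
    α + β ∈ shadow R μ := by
  obtain ⟨a, b, hab, rfl⟩ := hRpos hμ
  obtain ⟨i, j, hij, rfl⟩ := hRpos hα.1
  obtain ⟨p, q, hpq, rfl⟩ := hRpos hβ.1
  obtain ⟨x, y, -, hxy⟩ := hαβ
  obtain ⟨hai, hjb⟩ := le_and_le_of_root_sub_root_mem_simpleRootCone hab hij hα.2
  obtain ⟨hap, hqb⟩ := le_and_le_of_root_sub_root_mem_simpleRootCone hab hpq hβ.2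
  have hmem {u w : Fin (n + 1)} (hau : a ≤ u) (huw : u < w) (hwb : w ≤ b) :
      root u w ∈ shadow R (root a b) :=
    ⟨hR.root_mem_of_le hμ hau huw hwb, root_sub_root_mem_simpleRootCone hau hwb⟩
  rcases eq_or_eq_of_root_add_root_eq_root hij.ne hpq.ne hxy with rfl | rfl
  · rw [root_add_root]
    exact hmem hai (hij.trans hpq) hqb
  · rw [add_comm (root q j), root_add_root]
    exact hmem hap (hpq.trans hij) hjb

end IsHessenberg

end TypeA

open TypeA in
theorem shadow_closed_under_addition_typeA_general
    (ℓ : ℕ)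
    (e : Fin (ℓ + 1) → (Fin (ℓ + 1) → ℝ)) (he : ∀ i, e i = Pi.single i 1)
    (Sig Pos : Set (Fin (ℓ + 1) → ℝ))
    (hSig : Sig = {v | ∃ i j : Fin (ℓ + 1), i ≠ j ∧ v = e i - e j})
    (hPos : Pos = {v | ∃ i j : Fin (ℓ + 1), i < j ∧ v = e i - e j})
    (R : Set (Fin (ℓ + 1) → ℝ)) (hRPos : R ⊆ Pos)
    (hHess : ∀ α ∈ R, ∀ β ∈ Pos, α - β ∈ Pos → α - β ∈ R)
    (μ : Fin (ℓ + 1) → ℝ) (hμR : μ ∈ R)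
    (Sμ : Set (Fin (ℓ + 1) → ℝ))
    (hSμ : Sμ = {α | α ∈ R ∧ ∃ c : Fin ℓ → ℕ,
      μ - α = ∑ k : Fin ℓ, (c k : ℝ) • (e k.castSucc - e k.succ)}) :
    ∀ α ∈ Sμ, ∀ β ∈ Sμ, α + β ∈ Sig → α + β ∈ Sμ := by
  obtain rfl : e = fun i => Pi.single i 1 := funext he
  have hshadow : Sμ = shadow R μ := by
    rw [hSμ]
    ext α
    exact and_congr_right fun _ => mem_simpleRootCone_iff.symm
  subst hSig hPos hshadow
  exact fun α hα β hβ => IsHessenberg.add_mem_shadow hHess hRPos hμR hα hβ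

theorem shadow_closed_under_addition_typeA
    (ℓ : ℕ) (hl : 2 < ℓ)
    (e : Fin (ℓ + 1) → (Fin (ℓ + 1) → ℝ)) (he : ∀ i, e i = Pi.single i 1)
    (Sig Pos : Set (Fin (ℓ + 1) → ℝ))
    (hSig : Sig = {v | ∃ i j : Fin (ℓ + 1), i ≠ j ∧ v = e i - e j})
    (hPos : Pos = {v | ∃ i j : Fin (ℓ + 1), i < j ∧ v = e i - e j})
    (R : Set (Fin (ℓ + 1) → ℝ)) (hRPos : R ⊆ Pos)
    (hHess : ∀ α ∈ R, ∀ β ∈ Pos, α - β ∈ Pos → α - β ∈ R)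
    (μ : Fin (ℓ + 1) → ℝ) (hμR : μ ∈ R)
    (hμmax : ∀ γ ∈ Pos, μ + γ ∉ R)
    (Sμ : Set (Fin (ℓ + 1) → ℝ))
    (hSμ : Sμ = {α | α ∈ R ∧ ∃ c : Fin ℓ → ℕ,
      μ - α = ∑ k : Fin ℓ, (c k : ℝ) • (e k.castSucc - e k.succ)}) :
    ∀ α ∈ Sμ, ∀ β ∈ Sμ, α + β ∈ Sig → α + β ∈ Sμ :=
  shadow_closed_under_addition_typeA_general ℓ e he Sig Pos hSig hPos R hRPos hHess μ hμR Sμ hSμ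
end

section
/- Assume ω ∈ Σ₊ is the highest root (α ⪯ ω for every α ∈ Σ₊), and define Σ_{1/2} = {β ∈ Σ₊ \ {ω} : ω − β ∈ Σ} and Σ₀ = {β ∈ Σ₊ \ {ω} : ω − β ∉ Σ}. Then: (i) if β, γ ∈ Σ₀ and β + γ ∈ Σ, then β + γ ∈ Σ₀; (ii) if β ∈ Σ_{1/2}, γ ∈ Σ₀ and β + γ ∈ Σ, then β + γ ∈ Σ_{1/2}; (iii) if β, γ ∈ Σ_{1/2} and β + γ ∈ Σ, then β + γ = ω. (In Lie-algebraic terms: n₍₀₎ = ⊕_{β∈Σ₀} g_β is a subalgebra of the Iwasawa algebra n, and n₍₁/₂₎ ⊕ n₍₁₎ = ⊕_{β∈Σ_{1/2}∪{ω}} g_β is an ideal of n.) -/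
/-!
The grading is by the Cartan number `n(α, ω) = 2⟪α, ω⟫ / ⟪ω, ω⟫`, which is additive in `α`.
A highest root is dominant, so `n(α, ω) ≥ 0` for positive `α`; and `n(α, ω) < 2` for positive
`α ≠ ω`, since `n(α, ω) = 2` would make `2ω - α` a root above `ω`. Being an integer,
`n(α, ω) ∈ {0, 1}` on `Σ₊ \ {ω}`, and `n(α, ω) = 1` exactly when `ω - α` is a root. Thus `Σ₀`,
`Σ_{1/2}` and `{ω}` are the levels `0`, `1`, `2` of `n(·, ω)`, and the three claims follow from
additivity.
-/

open scoped RealInnerProductSpace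

section RootSystem

variable {V : Type*} [NormedAddCommGroup V] [InnerProductSpace ℝ V]

def IsCrystallographic (Sig : Set V) : Prop :=
  ∀ α ∈ Sig, ∀ β ∈ Sig, ∃ n : ℤ, 2 * ⟪β, α⟫ = (n : ℝ) * ⟪α, α⟫ ∧ β - (n : ℝ) • α ∈ Sig

noncomputable def cartanNumber (β α : V) : ℝ := 2 * ⟪β, α⟫ / ⟪α, α⟫

theorem cartanNumber_add_left (β γ α : V) :
    cartanNumber (β + γ) α = cartanNumber β α + cartanNumber γ α := by
  simp only [cartanNumber, inner_add_left, mul_add, add_div]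

theorem cartanNumber_sub_left (β γ α : V) :
    cartanNumber (β - γ) α = cartanNumber β α - cartanNumber γ α := by
  simp only [cartanNumber, inner_sub_left, mul_sub, sub_div]

theorem cartanNumber_self {α : V} (hα : α ≠ 0) : cartanNumber α α = 2 := by
  rw [cartanNumber, mul_div_assoc, div_self (real_inner_self_pos.2 hα).ne', mul_one]

variable {Sig : Set V}

theorem IsCrystallographic.exists_cartanNumber_eq (hcrys : IsCrystallographic Sig)
    (h0 : (0 : V) ∉ Sig) {α β : V} (hα : α ∈ Sig) (hβ : β ∈ Sig) :
    ∃ n : ℤ, cartanNumber β α = n ∧ β - (n : ℝ) • α ∈ Sig := by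
  obtain ⟨n, hn, hmem⟩ := hcrys α hα β hβ
  have : ⟪α, α⟫ ≠ 0 := (real_inner_self_pos.2 (ne_of_mem_of_not_mem hα h0)).ne'
  exact ⟨n, by rw [cartanNumber, hn, mul_div_cancel_right₀ _ this], hmem⟩

theorem IsCrystallographic.neg_mem (hcrys : IsCrystallographic Sig) (h0 : (0 : V) ∉ Sig)
    {α : V} (hα : α ∈ Sig) : -α ∈ Sig := by
  obtain ⟨n, hn, hmem⟩ := hcrys.exists_cartanNumber_eq h0 hα hα
  rw [cartanNumber_self (ne_of_mem_of_not_mem hα h0)] at hn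
  rwa [← hn, two_smul, sub_add_cancel_left] at hmem

theorem IsCrystallographic.sub_mem_of_inner_pos (hcrys : IsCrystallographic Sig)
    (h0 : (0 : V) ∉ Sig) {α β : V} (hα : α ∈ Sig) (hβ : β ∈ Sig) (hpos : 0 < ⟪α, β⟫)
    (hne : α ≠ β) : α - β ∈ Sig := by
  have hαα : 0 < ⟪α, α⟫ := real_inner_self_pos.2 (ne_of_mem_of_not_mem hα h0)
  have hββ : 0 < ⟪β, β⟫ := real_inner_self_pos.2 (ne_of_mem_of_not_mem hβ h0)
  obtain ⟨n, hn, hαβ⟩ := hcrys β hβ α hα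
  obtain ⟨m, hm, hβα⟩ := hcrys α hα β hβ
  rw [real_inner_comm] at hm
  have hn1 : 1 ≤ n := by exact_mod_cast (show (0 : ℝ) < n by nlinarith)
  have hm1 : 1 ≤ m := by exact_mod_cast (show (0 : ℝ) < m by nlinarith)
  rcases hn1.eq_or_lt with rfl | hn2
  · simpa using hαβ
  rcases hm1.eq_or_lt with rfl | hm2
  · simpa using hcrys.neg_mem h0 hβα
  -- Cauchy–Schwarz gives `n m ≤ 4`, so `n = m = 2` and then `α = β`.
  have hnm : (n : ℝ) * m ≤ 4 := by
    have := real_inner_mul_inner_self_le α β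
    nlinarith [mul_pos hαα hββ]
  have hnm' : n * m ≤ 4 := by exact_mod_cast hnm
  obtain ⟨rfl, rfl⟩ : n = 2 ∧ m = 2 := ⟨by nlinarith, by nlinarith⟩
  have hz : ⟪α - β, α - β⟫ = 0 := by
    rw [inner_sub_left, inner_sub_right, inner_sub_right, real_inner_comm α β]
    push_cast at hn hm
    linarith
  exact absurd (sub_eq_zero.mp (inner_self_eq_zero.mp hz)) hne

end RootSystem

theorem Module.Basis.inner_nonneg_of_repr_nonneg {V : Type*} [NormedAddCommGroup V]
    [InnerProductSpace ℝ V] {ι : Type*} [Fintype ι] (b : Module.Basis ι ℝ V) {v w : V}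
    (hw : ∀ i, 0 ≤ ⟪b i, w⟫) (hv : 0 ≤ b.repr v) : 0 ≤ ⟪v, w⟫ := by
  rw [← b.sum_repr v, sum_inner]
  exact Finset.sum_nonneg fun i _ => by
    rw [real_inner_smul_left]
    exact mul_nonneg (hv i) (hw i)

section HighestRoot

variable {V : Type*} [NormedAddCommGroup V] [InnerProductSpace ℝ V] {ι : Type*}

structure IsHighestRoot (Sig : Set V) (b : Module.Basis ι ℝ V) (ω : V) : Prop where
  mem : ω ∈ Sig
  repr_nonneg : 0 ≤ b.repr ω
  repr_le : ∀ α ∈ Sig, 0 ≤ b.repr α → b.repr α ≤ b.repr ω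

variable {Sig : Set V} {b : Module.Basis ι ℝ V} {ω : V}

namespace IsHighestRoot

theorem inner_basis_nonneg (hω : IsHighestRoot Sig b ω) (hcrys : IsCrystallographic Sig)
    (hb : ∀ i, b i ∈ Sig) (i : ι) : 0 ≤ ⟪b i, ω⟫ := by
  obtain ⟨n, hn, hmem⟩ := hcrys (b i) (hb i) ω hω.mem
  have hbi : 0 < ⟪b i, b i⟫ := real_inner_self_pos.2 (b.ne_zero i)
  by_contra! hneg
  rw [real_inner_comm] at hn
  have hn0 : (n : ℝ) < 0 := by nlinarith
  -- reflecting `ω` in `b i` would raise its `i`-th coordinate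
  have hrepr : b.repr (ω - (n : ℝ) • b i) = b.repr ω - Finsupp.single i (n : ℝ) := by simp
  have hle := hω.repr_le _ hmem (fun j => by
    classical
    rw [hrepr, Finsupp.sub_apply, Finsupp.single_apply]
    split_ifs <;> linarith [hω.repr_nonneg j]) i
  rw [hrepr, Finsupp.sub_apply, Finsupp.single_eq_same] at hle
  linarith

theorem ne_zero (hω : IsHighestRoot Sig b ω) (h0 : (0 : V) ∉ Sig) : ω ≠ 0 :=
  ne_of_mem_of_not_mem hω.mem h0

theorem sub_repr_nonneg (hω : IsHighestRoot Sig b ω) {α : V} (hα : α ∈ Sig)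
    (hαpos : 0 ≤ b.repr α) : 0 ≤ b.repr (ω - α) := by
  rw [map_sub]
  exact sub_nonneg.2 (hω.repr_le α hα hαpos)

variable [Fintype ι]

theorem cartanNumber_nonneg (hω : IsHighestRoot Sig b ω) (hcrys : IsCrystallographic Sig)
    (hb : ∀ i, b i ∈ Sig) {v : V} (hv : 0 ≤ b.repr v) : 0 ≤ cartanNumber v ω :=
  div_nonneg (mul_nonneg zero_le_two
    (b.inner_nonneg_of_repr_nonneg (hω.inner_basis_nonneg hcrys hb) hv)) real_inner_self_nonneg

theorem cartanNumber_lt_two (hω : IsHighestRoot Sig b ω) (hcrys : IsCrystallographic Sig)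
    (h0 : (0 : V) ∉ Sig) (hb : ∀ i, b i ∈ Sig) {α : V} (hα : α ∈ Sig)
    (hαpos : 0 ≤ b.repr α) (hne : α ≠ ω) : cartanNumber α ω < 2 := by
  have hle : cartanNumber α ω ≤ 2 := by
    have := hω.cartanNumber_nonneg hcrys hb (hω.sub_repr_nonneg hα hαpos)
    rw [cartanNumber_sub_left, cartanNumber_self (hω.ne_zero h0)] at this
    linarith
  refine hle.lt_of_ne fun h2 => hne ?_
  -- if `n(α, ω) = 2` then `2ω - α` is a root, and it lies above `ω` unless `α = ω`
  obtain ⟨n, hn, hmem⟩ := hcrys.exists_cartanNumber_eq h0 hω.mem hα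
  have h2ω : (2 : ℝ) • ω - α ∈ Sig := by
    simpa [← hn, h2] using hcrys.neg_mem h0 hmem
  have hrepr : b.repr ((2 : ℝ) • ω - α) = b.repr ω + b.repr (ω - α) := by
    rw [map_sub, map_sub, map_smul, two_smul, add_sub_assoc]
  have hle' := hω.repr_le _ h2ω
    (by rw [hrepr]; exact add_nonneg hω.repr_nonneg (hω.sub_repr_nonneg hα hαpos))
  rw [hrepr, add_le_iff_nonpos_right, map_sub, sub_nonpos] at hle'
  exact b.repr.injective (le_antisymm (hω.repr_le α hα hαpos) hle')

theorem cartanNumber_eq_zero_or_one (hω : IsHighestRoot Sig b ω)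
    (hcrys : IsCrystallographic Sig) (h0 : (0 : V) ∉ Sig) (hb : ∀ i, b i ∈ Sig) {α : V}
    (hα : α ∈ Sig) (hαpos : 0 ≤ b.repr α) (hne : α ≠ ω) :
    cartanNumber α ω = 0 ∨ cartanNumber α ω = 1 := by
  obtain ⟨n, hn, -⟩ := hcrys.exists_cartanNumber_eq h0 hω.mem hα
  have hlo := hω.cartanNumber_nonneg hcrys hb hαpos
  have hhi := hω.cartanNumber_lt_two hcrys h0 hb hα hαpos hne
  rw [hn] at hlo hhi ⊢
  have : 0 ≤ n := by exact_mod_cast hlo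
  have : n < 2 := by exact_mod_cast hhi
  interval_cases n <;> simp

theorem sub_mem_iff_cartanNumber_eq_one (hω : IsHighestRoot Sig b ω)
    (hcrys : IsCrystallographic Sig) (h0 : (0 : V) ∉ Sig) (hb : ∀ i, b i ∈ Sig) {α : V}
    (hα : α ∈ Sig) (hαpos : 0 ≤ b.repr α) (hne : α ≠ ω) :
    ω - α ∈ Sig ↔ cartanNumber α ω = 1 := by
  constructor
  · intro hsub
    have hcompl := hω.cartanNumber_eq_zero_or_one hcrys h0 hb hsub
      (hω.sub_repr_nonneg hα hαpos) (sub_eq_self.not.2 (ne_of_mem_of_not_mem hα h0))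
    rw [cartanNumber_sub_left, cartanNumber_self (hω.ne_zero h0)] at hcompl
    rcases hω.cartanNumber_eq_zero_or_one hcrys h0 hb hα hαpos hne with h | h <;>
      [(rw [h] at hcompl; norm_num at hcompl); exact h]
  · intro h1
    have hωω : 0 < ⟪ω, ω⟫ := real_inner_self_pos.2 (hω.ne_zero h0)
    have hpos : 0 < 2 * ⟪α, ω⟫ := by
      rw [← div_pos_iff_of_pos_right hωω, ← cartanNumber, h1]
      exact one_pos
    refine hcrys.sub_mem_of_inner_pos h0 hω.mem hα ?_ hne.symm
    rw [real_inner_comm]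
    linarith

theorem sub_notMem_iff_cartanNumber_eq_zero (hω : IsHighestRoot Sig b ω)
    (hcrys : IsCrystallographic Sig) (h0 : (0 : V) ∉ Sig) (hb : ∀ i, b i ∈ Sig) {α : V}
    (hα : α ∈ Sig) (hαpos : 0 ≤ b.repr α) (hne : α ≠ ω) :
    ω - α ∉ Sig ↔ cartanNumber α ω = 0 := by
  rw [hω.sub_mem_iff_cartanNumber_eq_one hcrys h0 hb hα hαpos hne]
  rcases hω.cartanNumber_eq_zero_or_one hcrys h0 hb hα hαpos hne with h | h <;> simp [h]

end IsHighestRoot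
end HighestRoot

theorem highest_root_grading_general
    {V : Type*} [NormedAddCommGroup V] [InnerProductSpace ℝ V]
    (Sig : Set V) (h0 : (0 : V) ∉ Sig)
    (hcrys : ∀ α ∈ Sig, ∀ β ∈ Sig, ∃ n : ℤ,
      2 * ⟪β, α⟫ = (n : ℝ) * ⟪α, α⟫ ∧ β - (n : ℝ) • α ∈ Sig)
    {ι : Type*} [Fintype ι] (b : Module.Basis ι ℝ V)
    (hb : ∀ i, b i ∈ Sig)
    -- positive roots
    (Pos : Set V) (hPos : Pos = {γ | γ ∈ Sig ∧ ∀ i, 0 ≤ b.repr γ i})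
    -- `ω` is the highest root
    (ω : V) (hω : ω ∈ Pos) (hhigh : ∀ α ∈ Pos, ∀ i, 0 ≤ b.repr (ω - α) i)
    (Shalf Szero : Set V)
    (hShalf : Shalf = {β | β ∈ Pos ∧ β ≠ ω ∧ ω - β ∈ Sig})
    (hSzero : Szero = {β | β ∈ Pos ∧ β ≠ ω ∧ ω - β ∉ Sig}) :
    (∀ β ∈ Szero, ∀ γ ∈ Szero, β + γ ∈ Sig → β + γ ∈ Szero) ∧
    (∀ β ∈ Shalf, ∀ γ ∈ Szero, β + γ ∈ Sig → β + γ ∈ Shalf) ∧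
    (∀ β ∈ Shalf, ∀ γ ∈ Shalf, β + γ ∈ Sig → β + γ = ω) := by
  have hnonneg (f : ι →₀ ℝ) : (∀ i, 0 ≤ f i) ↔ 0 ≤ f := (Finsupp.le_def (f := 0)).symm
  subst hPos hShalf hSzero
  simp only [hnonneg, Set.mem_ofPred_eq, map_sub, sub_nonneg] at hω hhigh ⊢
  have hω' : IsHighestRoot Sig b ω := ⟨hω.1, hω.2, fun α hα hαpos => hhigh α ⟨hα, hαpos⟩⟩
  have hωω : cartanNumber ω ω = 2 := cartanNumber_self (hω'.ne_zero h0)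
  have hhalf := fun {α : V} => hω'.sub_mem_iff_cartanNumber_eq_one hcrys h0 hb (α := α)
  have hzero := fun {α : V} => hω'.sub_notMem_iff_cartanNumber_eq_zero hcrys h0 hb (α := α)
  have hadd {β γ : V} (hβ : 0 ≤ b.repr β) (hγ : 0 ≤ b.repr γ) : 0 ≤ b.repr (β + γ) := by
    rw [map_add]
    exact add_nonneg hβ hγ
  refine ⟨?_, ?_, ?_⟩
  · rintro β ⟨⟨hβ, hβpos⟩, hβω, hβ0⟩ γ ⟨⟨hγ, hγpos⟩, hγω, hγ0⟩ hβγ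
    have hk : cartanNumber (β + γ) ω = 0 := by
      rw [cartanNumber_add_left, (hzero hβ hβpos hβω).1 hβ0, (hzero hγ hγpos hγω).1 hγ0, add_zero]
    have hne : β + γ ≠ ω := fun h => by norm_num [h, hωω] at hk
    exact ⟨⟨hβγ, hadd hβpos hγpos⟩, hne, (hzero hβγ (hadd hβpos hγpos) hne).2 hk⟩
  · rintro β ⟨⟨hβ, hβpos⟩, hβω, hβ1⟩ γ ⟨⟨hγ, hγpos⟩, hγω, hγ0⟩ hβγ
    have hk : cartanNumber (β + γ) ω = 1 := by
      rw [cartanNumber_add_left, (hhalf hβ hβpos hβω).1 hβ1, (hzero hγ hγpos hγω).1 hγ0, add_zero]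
    have hne : β + γ ≠ ω := fun h => by norm_num [h, hωω] at hk
    exact ⟨⟨hβγ, hadd hβpos hγpos⟩, hne, (hhalf hβγ (hadd hβpos hγpos) hne).2 hk⟩
  · rintro β ⟨⟨hβ, hβpos⟩, hβω, hβ1⟩ γ ⟨⟨hγ, hγpos⟩, hγω, hγ1⟩ hβγ
    by_contra hne
    have hk := hω'.cartanNumber_lt_two hcrys h0 hb hβγ (hadd hβpos hγpos) hne
    rw [cartanNumber_add_left, (hhalf hβ hβpos hβω).1 hβ1, (hhalf hγ hγpos hγω).1 hγ1] at hk
    norm_num at hk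

theorem highest_root_grading
    {V : Type*} [NormedAddCommGroup V] [InnerProductSpace ℝ V] [FiniteDimensional ℝ V]
    (Sig : Set V) (hfin : Sig.Finite) (h0 : (0 : V) ∉ Sig)
    (hspan : Submodule.span ℝ Sig = ⊤)
    (hcrys : ∀ α ∈ Sig, ∀ β ∈ Sig, ∃ n : ℤ,
      2 * ⟪β, α⟫ = (n : ℝ) * ⟪α, α⟫ ∧ β - (n : ℝ) • α ∈ Sig)
    {ι : Type*} [Fintype ι] (b : Module.Basis ι ℝ V)
    (hb : ∀ i, b i ∈ Sig)
    (hint : ∀ γ ∈ Sig, (∀ i, ∃ m : ℕ, b.repr γ i = (m : ℝ)) ∨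
      (∀ i, ∃ m : ℕ, b.repr γ i = -(m : ℝ)))
    -- positive roots
    (Pos : Set V) (hPos : Pos = {γ | γ ∈ Sig ∧ ∀ i, 0 ≤ b.repr γ i})
    -- `ω` is the highest root
    (ω : V) (hω : ω ∈ Pos) (hhigh : ∀ α ∈ Pos, ∀ i, 0 ≤ b.repr (ω - α) i)
    (Shalf Szero : Set V)
    (hShalf : Shalf = {β | β ∈ Pos ∧ β ≠ ω ∧ ω - β ∈ Sig})
    (hSzero : Szero = {β | β ∈ Pos ∧ β ≠ ω ∧ ω - β ∉ Sig}) :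
    (∀ β ∈ Szero, ∀ γ ∈ Szero, β + γ ∈ Sig → β + γ ∈ Szero) ∧
    (∀ β ∈ Shalf, ∀ γ ∈ Szero, β + γ ∈ Sig → β + γ ∈ Shalf) ∧
    (∀ β ∈ Shalf, ∀ γ ∈ Shalf, β + γ ∈ Sig → β + γ = ω) :=
  highest_root_grading_general Sig h0 hcrys b hb Pos hPos ω hω hhigh Shalf Szero hShalf hSzero
end
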